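/- Let v : ℝ × ℝ → ℝ be a smooth solution of the heat equation v_t + v_xx = 0 with v(t,x) ≠ 0 for all (t,x), set u := 2 v_x / v, and let c0, c1, c2, c3, c4 be real constants. Then Q[u](t,x) = 0 for all (t,x) if and only if there exists a real constant μ such that Q̂[v](t,x) = μ·v(t,x) for all (t,x). Here Q[u] := (−c1·u + c2·(x − t·u) + c4) − (c0 + 2c1·t + c2·t²)·u_t − (c1·x + c2·t·x + c3 + c4·t)·u_x and Q̂[v] := (c2·(x²/4 − t/2) + c4·x/2)·v − (c0 + 2c1·t + c2·t²)·v_t − (c1·x + c2·t·x + c3 + c4·t)·v_x. (A solution u of the Burgers equation is invariant with respect to a vector field Q from its maximal Lie invariance algebra if and only if u = 2v_x/v for a Q̂_μ-invariant solution v of the heat equation, where Q̂_μ = Q̂ − μ·v∂_v.) -/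

import Mathlib

/-- Partial derivative with respect to the first variable `t`. -/
noncomputable def pt (f : ℝ × ℝ → ℝ) : ℝ × ℝ → ℝ :=
  fun p => deriv (fun s => f (s, p.2)) p.1

/-- Partial derivative with respect to the second variable `x`. -/
noncomputable def px (f : ℝ × ℝ → ℝ) : ℝ × ℝ → ℝ :=
  fun p => deriv (fun s => f (p.1, s)) p.2

section helpers
variable {f : ℝ × ℝ → ℝ}

lemma sliceX_diff (hf : ContDiff ℝ (⊤ : ℕ∞) f) (t : ℝ) :
    Differentiable ℝ (fun s => f (t, s)) :=
  (hf.comp (contDiff_const.prodMk contDiff_id)).differentiable (by simp)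

lemma sliceT_diff (hf : ContDiff ℝ (⊤ : ℕ∞) f) (x : ℝ) :
    Differentiable ℝ (fun s => f (s, x)) :=
  (hf.comp (contDiff_id.prodMk contDiff_const)).differentiable (by simp)

lemma hasDerivAt_px (hf : ContDiff ℝ (⊤ : ℕ∞) f) (t x : ℝ) :
    HasDerivAt (fun s => f (t, s)) (px f (t, x)) x :=
  (sliceX_diff hf t x).hasDerivAt

lemma hasDerivAt_pt (hf : ContDiff ℝ (⊤ : ℕ∞) f) (x t : ℝ) :
    HasDerivAt (fun s => f (s, x)) (pt f (t, x)) t :=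
  (sliceT_diff hf x t).hasDerivAt

lemma pt_eq_fderiv (hf : Differentiable ℝ f) (p : ℝ × ℝ) :
    pt f p = fderiv ℝ f p (1, 0) := by
  have hι : HasDerivAt (fun s : ℝ => (s, p.2)) ((1:ℝ), (0:ℝ)) p.1 :=
    (hasDerivAt_id p.1).prodMk (hasDerivAt_const p.1 p.2)
  have h := HasFDerivAt.comp_hasDerivAt_of_eq p.1 (hf (p.1, p.2)).hasFDerivAt hι rfl
  simpa [pt, Function.comp_def] using h.deriv

lemma px_eq_fderiv (hf : Differentiable ℝ f) (p : ℝ × ℝ) :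
    px f p = fderiv ℝ f p (0, 1) := by
  have hι : HasDerivAt (fun s : ℝ => (p.1, s)) ((0:ℝ), (1:ℝ)) p.2 :=
    (hasDerivAt_const p.2 p.1).prodMk (hasDerivAt_id p.2)
  have h := HasFDerivAt.comp_hasDerivAt_of_eq p.2 (hf (p.1, p.2)).hasFDerivAt hι rfl
  simpa [px, Function.comp_def] using h.deriv

lemma contDiff_pt (hf : ContDiff ℝ (⊤ : ℕ∞) f) : ContDiff ℝ (⊤ : ℕ∞) (pt f) := by
  have h2 : pt f = fun p : ℝ × ℝ => fderiv ℝ f p (1, 0) :=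
    funext fun p => pt_eq_fderiv (hf.differentiable (by simp)) p
  rw [h2]
  exact (hf.fderiv_right (by simp)).clm_apply contDiff_const

lemma contDiff_px (hf : ContDiff ℝ (⊤ : ℕ∞) f) : ContDiff ℝ (⊤ : ℕ∞) (px f) := by
  have h2 : px f = fun p : ℝ × ℝ => fderiv ℝ f p (0, 1) :=
    funext fun p => px_eq_fderiv (hf.differentiable (by simp)) p
  rw [h2]
  exact (hf.fderiv_right (by simp)).clm_apply contDiff_const

lemma px_neg (g : ℝ × ℝ → ℝ) (p : ℝ × ℝ) : px (fun q => -g q) p = -(px g p) := by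
  simp [px, deriv.neg]

lemma pt_px_swap (hf : ContDiff ℝ (⊤ : ℕ∞) f) (p : ℝ × ℝ) : pt (px f) p = px (pt f) p := by
  have hd : Differentiable ℝ f := hf.differentiable (by simp)
  have hf' : ∀ y, HasFDerivAt f (fderiv ℝ f y) y := fun y => (hd y).hasFDerivAt
  have hfd : Differentiable ℝ (fderiv ℝ f) := (hf.fderiv_right (m := (⊤ : ℕ∞)) (by simp)).differentiable (by simp)
  have hx : HasFDerivAt (fderiv ℝ f) (fderiv ℝ (fderiv ℝ f) p) p := (hfd p).hasFDerivAt
  have hsym := second_derivative_symmetric hf' hx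
  have key : ∀ w u : ℝ × ℝ, fderiv ℝ (fun q => fderiv ℝ f q w) p u
      = fderiv ℝ (fderiv ℝ f) p u w := by
    intro w u
    have hc : HasFDerivAt (fun q : ℝ × ℝ => fderiv ℝ f q w)
        ((ContinuousLinearMap.apply ℝ ℝ w).comp (fderiv ℝ (fderiv ℝ f) p)) p :=
      (ContinuousLinearMap.apply ℝ ℝ w).hasFDerivAt.comp p hx
    rw [hc.fderiv]; rfl
  have dd : ∀ w : ℝ × ℝ, Differentiable ℝ (fun q : ℝ × ℝ => fderiv ℝ f q w) := fun w =>
    ((hf.fderiv_right (m := (⊤ : ℕ∞)) (by simp)).clm_apply contDiff_const).differentiable (by simp)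
  have e1 : px f = fun q => fderiv ℝ f q (0, 1) := funext fun q => px_eq_fderiv hd q
  have e2 : pt f = fun q => fderiv ℝ f q (1, 0) := funext fun q => pt_eq_fderiv hd q
  rw [e1, e2, pt_eq_fderiv (dd _), px_eq_fderiv (dd _), key, key]
  exact hsym _ _

end helpers

/-- A solution `u = 2 v_x / v` of the Burgers equation is invariant under a Lie
symmetry vector field `Q` iff `v` satisfies `Q̂[v] = μ v` for some constant `μ`,
i.e. `v` is a `Q̂_μ`-invariant solution of the heat equation. -/
theorem stmt8 (v : ℝ × ℝ → ℝ) (hv : ContDiff ℝ (⊤ : ℕ∞) v)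
    (hvne : ∀ p : ℝ × ℝ, v p ≠ 0)
    (hheat : ∀ p : ℝ × ℝ, pt v p + px (px v) p = 0)
    (c0 c1 c2 c3 c4 : ℝ) :
    let u : ℝ × ℝ → ℝ := fun p => 2 * px v p / v p
    let Qu : ℝ × ℝ → ℝ := fun p =>
      (-c1 * u p + c2 * (p.2 - p.1 * u p) + c4)
        - (c0 + 2 * c1 * p.1 + c2 * p.1 ^ 2) * pt u p
        - (c1 * p.2 + c2 * p.1 * p.2 + c3 + c4 * p.1) * px u p
    let Qhv : ℝ × ℝ → ℝ := fun p =>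
      (c2 * (p.2 ^ 2 / 4 - p.1 / 2) + c4 * p.2 / 2) * v p
        - (c0 + 2 * c1 * p.1 + c2 * p.1 ^ 2) * pt v p
        - (c1 * p.2 + c2 * p.1 * p.2 + c3 + c4 * p.1) * px v p
    (∀ p : ℝ × ℝ, Qu p = 0) ↔ (∃ μ : ℝ, ∀ p : ℝ × ℝ, Qhv p = μ * v p) := by
  intro u Qu Qhv
  -- smoothness of iterated derivatives
  have hB : ContDiff ℝ (⊤ : ℕ∞) (px v) := contDiff_px hv
  have hC : ContDiff ℝ (⊤ : ℕ∞) (px (px v)) := contDiff_px hB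
  have hEE : ContDiff ℝ (⊤ : ℕ∞) (px (px (px v))) := contDiff_px hC
  have hptv : ContDiff ℝ (⊤ : ℕ∞) (pt v) := contDiff_pt hv
  -- heat equation consequences
  have hAt : ∀ t x : ℝ, pt v (t, x) = -px (px v) (t, x) := fun t x => by
    have := hheat (t, x); linarith
  have hAtf : pt v = fun q => -px (px v) q := funext fun p => by
    have := hheat p; linarith
  have hBtv : ∀ t x : ℝ, pt (px v) (t, x) = -px (px (px v)) (t, x) := by
    intro t x
    rw [pt_px_swap hv (t, x), hAtf, px_neg]
  have hBtf : pt (px v) = fun q => -px (px (px v)) q := funext fun p => by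
    have h := hBtv p.1 p.2; exact h
  have hCtv : ∀ t x : ℝ, pt (px (px v)) (t, x) = -px (px (px (px v))) (t, x) := by
    intro t x
    rw [pt_px_swap hB (t, x), hBtf, px_neg]
  -- smoothness of Qhv
  have hQsm : ContDiff ℝ (⊤ : ℕ∞) Qhv := by
    have h : ContDiff ℝ (⊤ : ℕ∞) (fun p : ℝ × ℝ =>
        (c2 * (p.2 ^ 2 / 4 - p.1 / 2) + c4 * p.2 / 2) * v p
        - (c0 + 2 * c1 * p.1 + c2 * p.1 ^ 2) * pt v p
        - (c1 * p.2 + c2 * p.1 * p.2 + c3 + c4 * p.1) * px v p) := by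
      apply ContDiff.sub
      apply ContDiff.sub
      · exact ((contDiff_const.mul (((contDiff_snd.pow 2).div_const 4).sub
          (contDiff_fst.div_const 2))).add ((contDiff_const.mul contDiff_snd).div_const 2)).mul hv
      · exact ((contDiff_const.add (contDiff_const.mul contDiff_fst)).add
          (contDiff_const.mul (contDiff_fst.pow 2))).mul hptv
      · exact ((((contDiff_const.mul contDiff_snd).add
          ((contDiff_const.mul contDiff_fst).mul contDiff_snd)).add contDiff_const).add
          (contDiff_const.mul contDiff_fst)).mul hB
    exact h
  -- clean form of Qhv
  have hQdef : ∀ t x : ℝ, Qhv (t, x) =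
      (c2 * (x ^ 2 / 4 - t / 2) + c4 * x / 2) * v (t, x)
      + (c0 + 2 * c1 * t + c2 * t ^ 2) * px (px v) (t, x)
      - (c1 * x + c2 * t * x + c3 + c4 * t) * px v (t, x) := by
    intro t x
    show (c2 * (x ^ 2 / 4 - t / 2) + c4 * x / 2) * v (t, x)
        - (c0 + 2 * c1 * t + c2 * t ^ 2) * pt v (t, x)
        - (c1 * x + c2 * t * x + c3 + c4 * t) * px v (t, x) = _
    rw [hAt t x]; ring
  -- x-derivative of Qhv
  have hE1 : ∀ t x : ℝ, px Qhv (t, x) =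
      (c2 * x / 2 + c4 / 2) * v (t, x)
      + (c2 * (x ^ 2 / 4 - t / 2) + c4 * x / 2) * px v (t, x)
      + (c0 + 2 * c1 * t + c2 * t ^ 2) * px (px (px v)) (t, x)
      - (c1 + c2 * t) * px v (t, x)
      - (c1 * x + c2 * t * x + c3 + c4 * t) * px (px v) (t, x) := by
    intro t x
    have hsl : (fun s => Qhv (t, s)) = fun s =>
        (c2 * (s ^ 2 / 4 - t / 2) + c4 * s / 2) * v (t, s)
        + (c0 + 2 * c1 * t + c2 * t ^ 2) * px (px v) (t, s)
        - (c1 * s + c2 * t * s + c3 + c4 * t) * px v (t, s) :=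
      funext fun s => hQdef t s
    have hsq : HasDerivAt (fun s : ℝ => s ^ 2) (2 * x) x := by
      simpa using hasDerivAt_pow 2 x
    have hal : HasDerivAt (fun s : ℝ => c2 * (s ^ 2 / 4 - t / 2) + c4 * s / 2)
        (c2 * x / 2 + c4 / 2) x := by
      have h := (((hsq.div_const 4).sub_const (t / 2)).const_mul c2).add
        (((hasDerivAt_id' x).const_mul c4).div_const 2)
      exact h.congr_deriv (by ring)
    have hga : HasDerivAt (fun s : ℝ => c1 * s + c2 * t * s + c3 + c4 * t)
        (c1 + c2 * t) x := by
      have h := ((((hasDerivAt_id' x).const_mul c1).add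
        ((hasDerivAt_id' x).const_mul (c2 * t))).add_const c3).add_const (c4 * t)
      exact h.congr_deriv (by ring)
    have h := ((hal.mul (hasDerivAt_px hv t x)).add
        ((hasDerivAt_px hC t x).const_mul (c0 + 2 * c1 * t + c2 * t ^ 2))).sub
      (hga.mul (hasDerivAt_px hB t x))
    show deriv (fun s => Qhv (t, s)) x = _
    rw [hsl]
    exact h.deriv.trans (by ring)
  -- second x-derivative of Qhv
  have hE2 : ∀ t x : ℝ, px (px Qhv) (t, x) =
      c2 / 2 * v (t, x)
      + 2 * (c2 * x / 2 + c4 / 2) * px v (t, x)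
      + (c2 * (x ^ 2 / 4 - t / 2) + c4 * x / 2) * px (px v) (t, x)
      + (c0 + 2 * c1 * t + c2 * t ^ 2) * px (px (px (px v))) (t, x)
      - 2 * (c1 + c2 * t) * px (px v) (t, x)
      - (c1 * x + c2 * t * x + c3 + c4 * t) * px (px (px v)) (t, x) := by
    intro t x
    have hsl : (fun s => px Qhv (t, s)) = fun s =>
        (c2 * s / 2 + c4 / 2) * v (t, s)
        + (c2 * (s ^ 2 / 4 - t / 2) + c4 * s / 2) * px v (t, s)
        + (c0 + 2 * c1 * t + c2 * t ^ 2) * px (px (px v)) (t, s)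
        - (c1 + c2 * t) * px v (t, s)
        - (c1 * s + c2 * t * s + c3 + c4 * t) * px (px v) (t, s) :=
      funext fun s => hE1 t s
    have hsq : HasDerivAt (fun s : ℝ => s ^ 2) (2 * x) x := by
      simpa using hasDerivAt_pow 2 x
    have h1 : HasDerivAt (fun s : ℝ => c2 * s / 2 + c4 / 2) (c2 / 2) x := by
      have h := (((hasDerivAt_id' x).const_mul c2).div_const 2).add_const (c4 / 2)
      exact h.congr_deriv (by ring)
    have hal : HasDerivAt (fun s : ℝ => c2 * (s ^ 2 / 4 - t / 2) + c4 * s / 2)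
        (c2 * x / 2 + c4 / 2) x := by
      have h := (((hsq.div_const 4).sub_const (t / 2)).const_mul c2).add
        (((hasDerivAt_id' x).const_mul c4).div_const 2)
      exact h.congr_deriv (by ring)
    have hga : HasDerivAt (fun s : ℝ => c1 * s + c2 * t * s + c3 + c4 * t)
        (c1 + c2 * t) x := by
      have h := ((((hasDerivAt_id' x).const_mul c1).add
        ((hasDerivAt_id' x).const_mul (c2 * t))).add_const c3).add_const (c4 * t)
      exact h.congr_deriv (by ring)
    have h := ((((h1.mul (hasDerivAt_px hv t x)).add
        (hal.mul (hasDerivAt_px hB t x))).add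
        ((hasDerivAt_px hEE t x).const_mul (c0 + 2 * c1 * t + c2 * t ^ 2))).sub
        ((hasDerivAt_px hB t x).const_mul (c1 + c2 * t))).sub
      (hga.mul (hasDerivAt_px hC t x))
    show deriv (fun s => px Qhv (t, s)) x = _
    rw [hsl]
    exact h.deriv.trans (by ring)
  -- t-derivative of Qhv
  have hE3 : ∀ t x : ℝ, pt Qhv (t, x) =
      -(c2 / 2) * v (t, x)
      - (c2 * (x ^ 2 / 4 - t / 2) + c4 * x / 2) * px (px v) (t, x)
      + (2 * c1 + 2 * c2 * t) * px (px v) (t, x)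
      - (c0 + 2 * c1 * t + c2 * t ^ 2) * px (px (px (px v))) (t, x)
      - (c2 * x + c4) * px v (t, x)
      + (c1 * x + c2 * t * x + c3 + c4 * t) * px (px (px v)) (t, x) := by
    intro t x
    have hsl : (fun s => Qhv (s, x)) = fun s =>
        (c2 * (x ^ 2 / 4 - s / 2) + c4 * x / 2) * v (s, x)
        + (c0 + 2 * c1 * s + c2 * s ^ 2) * px (px v) (s, x)
        - (c1 * x + c2 * s * x + c3 + c4 * s) * px v (s, x) :=
      funext fun s => hQdef s x
    have hvt : HasDerivAt (fun s => v (s, x)) (-px (px v) (t, x)) t := by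
      have h := hasDerivAt_pt hv x t; rw [hAt t x] at h; exact h
    have hBt : HasDerivAt (fun s => px v (s, x)) (-px (px (px v)) (t, x)) t := by
      have h := hasDerivAt_pt hB x t; rw [hBtv t x] at h; exact h
    have hCt : HasDerivAt (fun s => px (px v) (s, x)) (-px (px (px (px v))) (t, x)) t := by
      have h := hasDerivAt_pt hC x t; rw [hCtv t x] at h; exact h
    have hsq : HasDerivAt (fun s : ℝ => s ^ 2) (2 * t) t := by
      simpa using hasDerivAt_pow 2 t
    have halt : HasDerivAt (fun s : ℝ => c2 * (x ^ 2 / 4 - s / 2) + c4 * x / 2)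
        (-(c2 / 2)) t := by
      have h := ((HasDerivAt.const_sub (x ^ 2 / 4) ((hasDerivAt_id' t).div_const 2)).const_mul
        c2).add_const (c4 * x / 2)
      exact h.congr_deriv (by ring)
    have hbet : HasDerivAt (fun s : ℝ => c0 + 2 * c1 * s + c2 * s ^ 2)
        (2 * c1 + 2 * c2 * t) t := by
      have h := ((((hasDerivAt_id' t).const_mul (2 * c1)).const_add c0)).add
        (hsq.const_mul c2)
      exact h.congr_deriv (by ring)
    have hgat : HasDerivAt (fun s : ℝ => c1 * x + c2 * s * x + c3 + c4 * s)
        (c2 * x + c4) t := by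
      have h2 : HasDerivAt (fun s : ℝ => c2 * s * x) (c2 * x) t := by
        have h := ((hasDerivAt_id' t).const_mul c2).mul_const x
        exact h.congr_deriv (by ring)
      have h := (((h2.const_add (c1 * x)).add_const c3)).add ((hasDerivAt_id' t).const_mul c4)
      exact h.congr_deriv (by ring)
    have h := (((halt.mul hvt).add (hbet.mul hCt)).sub (hgat.mul hBt))
    show deriv (fun s => Qhv (s, x)) t = _
    rw [hsl]
    exact h.deriv.trans (by ring)
  -- derivatives of u
  have hpxu : ∀ t x : ℝ, px u (t, x) =
      (2 * px (px v) (t, x) * v (t, x) - 2 * px v (t, x) * px v (t, x)) / v (t, x) ^ 2 := by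
    intro t x
    have h := ((hasDerivAt_px hB t x).const_mul 2).div (hasDerivAt_px hv t x) (hvne (t, x))
    show deriv (fun s => u (t, s)) x = _
    have hsl : (fun s => u (t, s)) = fun s => 2 * px v (t, s) / v (t, s) := rfl
    rw [hsl]
    exact h.deriv.trans (by ring)
  have hptu : ∀ t x : ℝ, pt u (t, x) =
      (-(2 * px (px (px v)) (t, x)) * v (t, x) + 2 * px v (t, x) * px (px v) (t, x))
        / v (t, x) ^ 2 := by
    intro t x
    have hvt : HasDerivAt (fun s => v (s, x)) (-px (px v) (t, x)) t := by
      have h := hasDerivAt_pt hv x t; rw [hAt t x] at h; exact h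
    have hBt : HasDerivAt (fun s => px v (s, x)) (-px (px (px v)) (t, x)) t := by
      have h := hasDerivAt_pt hB x t; rw [hBtv t x] at h; exact h
    have h := (hBt.const_mul 2).div hvt (hvne (t, x))
    show deriv (fun s => u (s, x)) t = _
    have hsl : (fun s => u (s, x)) = fun s => 2 * px v (s, x) / v (s, x) := rfl
    rw [hsl]
    exact h.deriv.trans (by ring)
  -- derivatives of F = Qhv / v
  have hpxF : ∀ t x : ℝ, px (fun q => Qhv q / v q) (t, x) =
      (px Qhv (t, x) * v (t, x) - Qhv (t, x) * px v (t, x)) / v (t, x) ^ 2 := by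
    intro t x
    have h := (hasDerivAt_px hQsm t x).div (hasDerivAt_px hv t x) (hvne (t, x))
    show deriv (fun s => Qhv (t, s) / v (t, s)) x = _
    exact h.deriv
  have hptF : ∀ t x : ℝ, pt (fun q => Qhv q / v q) (t, x) =
      (pt Qhv (t, x) * v (t, x) - Qhv (t, x) * pt v (t, x)) / v (t, x) ^ 2 := by
    intro t x
    have h := (hasDerivAt_pt hQsm x t).div (hasDerivAt_pt hv x t) (hvne (t, x))
    show deriv (fun s => Qhv (s, x) / v (s, x)) t = _
    exact h.deriv
  -- the key identity
  have hKI : ∀ t x : ℝ, Qu (t, x) = 2 * px (fun q => Qhv q / v q) (t, x) := by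
    intro t x
    have h1 : Qu (t, x) = (-c1 * (2 * px v (t, x) / v (t, x))
        + c2 * (x - t * (2 * px v (t, x) / v (t, x))) + c4)
        - (c0 + 2 * c1 * t + c2 * t ^ 2) * pt u (t, x)
        - (c1 * x + c2 * t * x + c3 + c4 * t) * px u (t, x) := rfl
    rw [h1, hptu t x, hpxu t x, hpxF t x, hE1 t x, hQdef t x]
    have hvn := hvne (t, x)
    field_simp
    ring
  constructor
  · intro hQu
    have hpxF0 : ∀ t x : ℝ, px (fun q => Qhv q / v q) (t, x) = 0 := by
      intro t x
      have h := hKI t x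
      rw [hQu (t, x)] at h
      linarith
    have hdiffX : ∀ t : ℝ, Differentiable ℝ (fun s => Qhv (t, s) / v (t, s)) := fun t =>
      Differentiable.div (sliceX_diff hQsm t) (sliceX_diff hv t) (fun s => hvne (t, s))
    have hQF : ∀ t x : ℝ, Qhv (t, x) = (Qhv (t, 0) / v (t, 0)) * v (t, x) := by
      intro t x
      have h := is_const_of_deriv_eq_zero (hdiffX t) (fun s => hpxF0 t s) x 0
      rw [← h]
      exact (div_mul_cancel₀ _ (hvne (t, x))).symm
    have hpxQ2 : ∀ t x : ℝ, px Qhv (t, x) = (Qhv (t, 0) / v (t, 0)) * px v (t, x) := by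
      intro t x
      have hsl : (fun s => Qhv (t, s)) = fun s => (Qhv (t, 0) / v (t, 0)) * v (t, s) :=
        funext fun s => hQF t s
      have h := (hasDerivAt_px hv t x).const_mul (Qhv (t, 0) / v (t, 0))
      show deriv (fun s => Qhv (t, s)) x = _
      rw [hsl]
      exact h.deriv
    have hpxpxQ : ∀ t x : ℝ, px (px Qhv) (t, x)
        = (Qhv (t, 0) / v (t, 0)) * px (px v) (t, x) := by
      intro t x
      have hsl : (fun s => px Qhv (t, s)) = fun s => (Qhv (t, 0) / v (t, 0)) * px v (t, s) :=
        funext fun s => hpxQ2 t s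
      have h := (hasDerivAt_px hB t x).const_mul (Qhv (t, 0) / v (t, 0))
      show deriv (fun s => px Qhv (t, s)) x = _
      rw [hsl]
      exact h.deriv
    have hheatQ : ∀ t x : ℝ, pt Qhv (t, x) + px (px Qhv) (t, x) = 0 := by
      intro t x; rw [hE3 t x, hE2 t x]; ring
    have hptF0 : ∀ t x : ℝ, pt (fun q => Qhv q / v q) (t, x) = 0 := by
      intro t x
      have h1 : pt Qhv (t, x) = -((Qhv (t, 0) / v (t, 0)) * px (px v) (t, x)) := by
        have h := hheatQ t x
        rw [hpxpxQ t x] at h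
        linarith
      rw [hptF t x, h1, hQF t x, hAt t x]
      ring
    have hdiffT : Differentiable ℝ (fun s => Qhv (s, 0) / v (s, 0)) :=
      Differentiable.div (sliceT_diff hQsm 0) (sliceT_diff hv 0) (fun s => hvne (s, 0))
    refine ⟨Qhv (0, 0) / v (0, 0), fun p => ?_⟩
    have hFt : Qhv (p.1, 0) / v (p.1, 0) = Qhv (0, 0) / v (0, 0) :=
      is_const_of_deriv_eq_zero hdiffT (fun s => hptF0 s 0) p.1 0
    have h := hQF p.1 p.2
    rw [hFt] at h
    exact h
  · rintro ⟨μ, hμ⟩ p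
    have hsl : (fun s => Qhv (p.1, s) / v (p.1, s)) = fun _ => μ := by
      funext s
      rw [hμ (p.1, s), mul_div_assoc, div_self (hvne (p.1, s)), mul_one]
    have h0 : px (fun q => Qhv q / v q) (p.1, p.2) = 0 := by
      show deriv (fun s => Qhv (p.1, s) / v (p.1, s)) p.2 = 0
      rw [hsl]
      exact deriv_const p.2 μ
    have h := hKI p.1 p.2
    rw [h0] at h
    show Qu (p.1, p.2) = 0
    rw [h]
    ring
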